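/- For the complete bipartite graph K_{⌊n/2⌋,⌈n/2⌉}, PI_w(K_{⌊n/2⌋,⌈n/2⌉}) = n² · ⌊n/2⌋ · ⌈n/2⌉. -/
import Mathlib


open Finset
open scoped Classical

/-- Number of vertices strictly closer to `u` than to `v`. -/
noncomputable def ncl {V : Type*} [Fintype V] (G : SimpleGraph V) (u v : V) : ℕ :=
  (Finset.univ.filter fun x => G.dist x u < G.dist x v).card

/-- Weighted vertex PI index: each edge `uv` contributes
`(deg u + deg v) * (n_u(e) + n_v(e))`; each edge is counted twice in the double sum. -/
noncomputable def PIw {V : Type*} [Fintype V] (G : SimpleGraph V) : ℝ :=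
  (∑ u, ∑ v, if G.Adj u v then
    (((G.degree u + G.degree v : ℕ) : ℝ) * ((ncl G u v + ncl G v u : ℕ) : ℝ)) else 0) / 2

variable {a b : ℕ}


lemma dist_lr (i : Fin a) (j : Fin b) :
    (completeBipartiteGraph (Fin a) (Fin b)).dist (Sum.inl i) (Sum.inr j) = 1 := by
  rw [SimpleGraph.dist_eq_one_iff_adj]; simp

lemma dist_rl (i : Fin a) (j : Fin b) :
    (completeBipartiteGraph (Fin a) (Fin b)).dist (Sum.inr j) (Sum.inl i) = 1 := by
  rw [SimpleGraph.dist_eq_one_iff_adj]; simp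

lemma dist_ll (i i' : Fin a) (j : Fin b) (h : i ≠ i') :
    (completeBipartiteGraph (Fin a) (Fin b)).dist (Sum.inl i) (Sum.inl i') = 2 := by
  have h1 : (completeBipartiteGraph (Fin a) (Fin b)).Adj (Sum.inl i) (Sum.inr j) := by simp
  have h2 : (completeBipartiteGraph (Fin a) (Fin b)).Adj (Sum.inr j) (Sum.inl i') := by simp
  have w : (completeBipartiteGraph (Fin a) (Fin b)).Walk (Sum.inl i) (Sum.inl i') :=
    .cons h1 (.cons h2 .nil)
  have hle := by simpa using SimpleGraph.dist_le (SimpleGraph.Walk.cons h1 (SimpleGraph.Walk.cons h2 SimpleGraph.Walk.nil))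
  have h0 : (completeBipartiteGraph (Fin a) (Fin b)).dist (Sum.inl i) (Sum.inl i') ≠ 0 := by
    intro hc
    rcases SimpleGraph.dist_eq_zero_iff_eq_or_not_reachable.mp hc with hc | hc
    · exact h (by simpa using hc)
    · exact hc ⟨w⟩
  have hne1 : (completeBipartiteGraph (Fin a) (Fin b)).dist (Sum.inl i) (Sum.inl i') ≠ 1 := by
    intro hc
    have := SimpleGraph.dist_eq_one_iff_adj.mp hc
    simp at this
  omega

lemma dist_rr (j j' : Fin b) (i : Fin a) (h : j ≠ j') :
    (completeBipartiteGraph (Fin a) (Fin b)).dist (Sum.inr j) (Sum.inr j') = 2 := by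
  have h1 : (completeBipartiteGraph (Fin a) (Fin b)).Adj (Sum.inr j) (Sum.inl i) := by simp
  have h2 : (completeBipartiteGraph (Fin a) (Fin b)).Adj (Sum.inl i) (Sum.inr j') := by simp
  have w : (completeBipartiteGraph (Fin a) (Fin b)).Walk (Sum.inr j) (Sum.inr j') :=
    .cons h1 (.cons h2 .nil)
  have hle := by simpa using SimpleGraph.dist_le (SimpleGraph.Walk.cons h1 (SimpleGraph.Walk.cons h2 SimpleGraph.Walk.nil))
  have h0 : (completeBipartiteGraph (Fin a) (Fin b)).dist (Sum.inr j) (Sum.inr j') ≠ 0 := by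
    intro hc
    rcases SimpleGraph.dist_eq_zero_iff_eq_or_not_reachable.mp hc with hc | hc
    · exact h (by simpa using hc)
    · exact hc ⟨w⟩
  have hne1 : (completeBipartiteGraph (Fin a) (Fin b)).dist (Sum.inr j) (Sum.inr j') ≠ 1 := by
    intro hc
    have := SimpleGraph.dist_eq_one_iff_adj.mp hc
    simp at this
  omega

lemma ncl_lr (i : Fin a) (j : Fin b) :
    ncl (completeBipartiteGraph (Fin a) (Fin b)) (Sum.inl i) (Sum.inr j) = b := by
  have hb : 0 < b := j.pos
  rw [ncl]
  have hset : (Finset.univ.filter fun x => (completeBipartiteGraph (Fin a) (Fin b)).dist x (Sum.inl i)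
      < (completeBipartiteGraph (Fin a) (Fin b)).dist x (Sum.inr j))
      = insert (Sum.inl i) (((univ : Finset (Fin b)).map ⟨Sum.inr, Sum.inr_injective⟩).erase (Sum.inr j)) := by
    ext x
    rcases x with i' | j'
    · by_cases h : i' = i
      · subst h
        simp [SimpleGraph.dist_self, dist_lr]
      · simp only [mem_filter, mem_univ, true_and, mem_insert, Sum.inl.injEq, mem_erase,
          Finset.mem_map]
        rw [dist_lr, dist_ll i' i j h]
        simp [h]
    · by_cases h : j' = j
      · subst h
        simp [SimpleGraph.dist_self, dist_rl]
      · simp only [mem_filter, mem_univ, true_and, mem_insert, mem_erase, Finset.mem_map]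
        rw [dist_rl, dist_rr j' j i h]
        simp [h]
  rw [hset, Finset.card_insert_of_notMem (by simp), Finset.card_erase_of_mem (by simp)]
  simp
  omega

lemma ncl_rl (i : Fin a) (j : Fin b) :
    ncl (completeBipartiteGraph (Fin a) (Fin b)) (Sum.inr j) (Sum.inl i) = a := by
  have ha : 0 < a := i.pos
  rw [ncl]
  have hset : (Finset.univ.filter fun x => (completeBipartiteGraph (Fin a) (Fin b)).dist x (Sum.inr j)
      < (completeBipartiteGraph (Fin a) (Fin b)).dist x (Sum.inl i))
      = insert (Sum.inr j) (((univ : Finset (Fin a)).map ⟨Sum.inl, Sum.inl_injective⟩).erase (Sum.inl i)) := by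
    ext x
    rcases x with i' | j'
    · by_cases h : i' = i
      · subst h
        simp [SimpleGraph.dist_self, dist_lr]
      · simp only [mem_filter, mem_univ, true_and, mem_insert, mem_erase, Finset.mem_map]
        rw [dist_lr, dist_ll i' i j h]
        simp [h]
    · by_cases h : j' = j
      · subst h
        simp [SimpleGraph.dist_self, dist_rl]
      · simp only [mem_filter, mem_univ, true_and, mem_insert, Sum.inr.injEq, mem_erase,
          Finset.mem_map]
        rw [dist_rl, dist_rr j' j i h]
        simp [h]
  rw [hset, Finset.card_insert_of_notMem (by simp), Finset.card_erase_of_mem (by simp)]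
  simp
  omega

lemma deg_l (i : Fin a) : (completeBipartiteGraph (Fin a) (Fin b)).degree (Sum.inl i) = b := by
  rw [SimpleGraph.degree, SimpleGraph.neighborFinset_eq_filter]
  rw [show filter (fun w : Fin a ⊕ Fin b => ((completeBipartiteGraph (Fin a) (Fin b)).Adj (Sum.inl i) w)) univ
    = univ.map ⟨Sum.inr, Sum.inr_injective⟩ by ext x; cases x <;> simp]
  simp

lemma deg_r (j : Fin b) : (completeBipartiteGraph (Fin a) (Fin b)).degree (Sum.inr j) = a := by
  rw [SimpleGraph.degree, SimpleGraph.neighborFinset_eq_filter]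
  rw [show filter (fun w : Fin a ⊕ Fin b => ((completeBipartiteGraph (Fin a) (Fin b)).Adj (Sum.inr j) w)) univ
    = univ.map ⟨Sum.inl, Sum.inl_injective⟩ by ext x; cases x <;> simp]
  simp


theorem PIw_completeBipartite_balanced (n : ℕ) :
    PIw (completeBipartiteGraph (Fin (n / 2)) (Fin ((n + 1) / 2))) =
      (n : ℝ) ^ 2 * ((n / 2 : ℕ) : ℝ) * (((n + 1) / 2 : ℕ) : ℝ) := by
  have hab : n / 2 + (n + 1) / 2 = n := by omega
  set G' := completeBipartiteGraph (Fin (n / 2)) (Fin ((n + 1) / 2)) with hG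
  rw [PIw, Fintype.sum_sum_type]
  simp only [Fintype.sum_sum_type]
  have h1 : ∀ (i : Fin (n/2)) (j : Fin ((n+1)/2)),
      (if G'.Adj (Sum.inl i) (Sum.inr j) then
        (((G'.degree (Sum.inl i) + G'.degree (Sum.inr j) : ℕ) : ℝ) *
          ((ncl G' (Sum.inl i) (Sum.inr j) + ncl G' (Sum.inr j) (Sum.inl i) : ℕ) : ℝ)) else 0)
      = (n : ℝ) * (n : ℝ) := by
    intro i j
    rw [if_pos (by simp [hG]), hG, deg_l, deg_r, ncl_lr, ncl_rl,
      show ((n+1)/2 + n/2 : ℕ) = n by omega]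
  have h2 : ∀ (i : Fin (n/2)) (j : Fin ((n+1)/2)),
      (if G'.Adj (Sum.inr j) (Sum.inl i) then
        (((G'.degree (Sum.inr j) + G'.degree (Sum.inl i) : ℕ) : ℝ) *
          ((ncl G' (Sum.inr j) (Sum.inl i) + ncl G' (Sum.inl i) (Sum.inr j) : ℕ) : ℝ)) else 0)
      = (n : ℝ) * (n : ℝ) := by
    intro i j
    rw [if_pos (by simp [hG]), hG, deg_l, deg_r, ncl_lr, ncl_rl,
      show (n/2 + (n+1)/2 : ℕ) = n from hab]
  have e1 : ∀ i : Fin (n/2), (∑ i' : Fin (n/2), if G'.Adj (Sum.inl i) (Sum.inl i') then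
        (((G'.degree (Sum.inl i) + G'.degree (Sum.inl i') : ℕ) : ℝ) *
          ((ncl G' (Sum.inl i) (Sum.inl i') + ncl G' (Sum.inl i') (Sum.inl i) : ℕ) : ℝ)) else 0) = 0 :=
    fun i => Finset.sum_eq_zero fun i' _ => if_neg (by simp [hG])
  have e4 : ∀ j : Fin ((n+1)/2), (∑ j' : Fin ((n+1)/2), if G'.Adj (Sum.inr j) (Sum.inr j') then
        (((G'.degree (Sum.inr j) + G'.degree (Sum.inr j') : ℕ) : ℝ) *
          ((ncl G' (Sum.inr j) (Sum.inr j') + ncl G' (Sum.inr j') (Sum.inr j) : ℕ) : ℝ)) else 0) = 0 :=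
    fun j => Finset.sum_eq_zero fun j' _ => if_neg (by simp [hG])
  have T1 : (∑ i : Fin (n/2), ((∑ i' : Fin (n/2), if G'.Adj (Sum.inl i) (Sum.inl i') then
        (((G'.degree (Sum.inl i) + G'.degree (Sum.inl i') : ℕ) : ℝ) *
          ((ncl G' (Sum.inl i) (Sum.inl i') + ncl G' (Sum.inl i') (Sum.inl i) : ℕ) : ℝ)) else 0)
      + (∑ j : Fin ((n+1)/2), if G'.Adj (Sum.inl i) (Sum.inr j) then
        (((G'.degree (Sum.inl i) + G'.degree (Sum.inr j) : ℕ) : ℝ) *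
          ((ncl G' (Sum.inl i) (Sum.inr j) + ncl G' (Sum.inr j) (Sum.inl i) : ℕ) : ℝ)) else 0)))
      = ((n/2 : ℕ) : ℝ) * ((((n+1)/2 : ℕ) : ℝ) * ((n : ℝ) * n)) := by
    rw [Finset.sum_congr rfl fun i _ => by
      rw [e1 i, zero_add, Finset.sum_congr rfl fun j _ => h1 i j, Finset.sum_const,
        nsmul_eq_mul, Finset.card_univ, Fintype.card_fin]]
    rw [Finset.sum_const, nsmul_eq_mul, Finset.card_univ, Fintype.card_fin]
  have T2 : (∑ j : Fin ((n+1)/2), ((∑ i : Fin (n/2), if G'.Adj (Sum.inr j) (Sum.inl i) then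
        (((G'.degree (Sum.inr j) + G'.degree (Sum.inl i) : ℕ) : ℝ) *
          ((ncl G' (Sum.inr j) (Sum.inl i) + ncl G' (Sum.inl i) (Sum.inr j) : ℕ) : ℝ)) else 0)
      + (∑ j' : Fin ((n+1)/2), if G'.Adj (Sum.inr j) (Sum.inr j') then
        (((G'.degree (Sum.inr j) + G'.degree (Sum.inr j') : ℕ) : ℝ) *
          ((ncl G' (Sum.inr j) (Sum.inr j') + ncl G' (Sum.inr j') (Sum.inr j) : ℕ) : ℝ)) else 0)))
      = (((n+1)/2 : ℕ) : ℝ) * (((n/2 : ℕ) : ℝ) * ((n : ℝ) * n)) := by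
    rw [Finset.sum_congr rfl fun j _ => by
      rw [e4 j, add_zero, Finset.sum_congr rfl fun i _ => h2 i j, Finset.sum_const,
        nsmul_eq_mul, Finset.card_univ, Fintype.card_fin]]
    rw [Finset.sum_const, nsmul_eq_mul, Finset.card_univ, Fintype.card_fin]
  rw [T1, T2]
  ring
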